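/- Let ν ∈ ℝ and β = (1+ν)/2. For every t ∈ ℝ, although each of the three kernels below blows up like 1/s along the diagonal, lim_{s→0, s≠0} [ G^B_{n_x n_x τ_y} + ν G^B_{τ_x τ_x τ_y} + (β/2)·K^H ](γ(t), γ(t+s)) = 0. Here, with r = x − γ(s′), n_x = n(t), τ_x = τ(t), τ_y = τ(s′): G^B_{n_x n_x τ_y}(x, γ(s′)) = −(1/(2π))(r·n_x)(n_x·τ_y)/‖r‖² + (1/(2π))(r·τ_y)(r·n_x)²/‖r‖⁴ − (1/(4π))(r·τ_y)/‖r‖², G^B_{τ_x τ_x τ_y}(x, γ(s′)) = −(1/(2π))(r·τ_x)(τ_x·τ_y)/‖r‖² + (1/(2π))(r·τ_y)(r·τ_x)²/‖r‖⁴ − (1/(4π))(r·τ_y)/‖r‖², and K^H(x, γ(s′)) = (r·τ(s′))/(π‖r‖²) is the Hilbert transform kernel, all evaluated at x = γ(t). -/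

import Mathlib

open Real Filter Topology MeasureTheory

noncomputable section

/-- Euclidean dot product on `ℝ × ℝ`. -/
def dot2 (v w : ℝ × ℝ) : ℝ := v.1 * w.1 + v.2 * w.2

/-- Unit tangent vector `τ(s) = γ′(s)`. -/
def tang (γ : ℝ → ℝ × ℝ) (s : ℝ) : ℝ × ℝ := deriv γ s

/-- Unit normal vector `n(s) = (τ₂(s), −τ₁(s))`. -/
def nor (γ : ℝ → ℝ × ℝ) (s : ℝ) : ℝ × ℝ := ((deriv γ s).2, -(deriv γ s).1)

/-- Signed curvature `κ(s) = −γ″(s)·n(s)`. -/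
def curv (γ : ℝ → ℝ × ℝ) (s : ℝ) : ℝ := -(dot2 (deriv (deriv γ) s) (nor γ s))

/-- Explicit formula for `G^B_{n_x n_x τ_y}(x, γ(s'))`, with `r = x − γ(s')`,
`n_x = n(t)`, `τ_y = τ(s')`. -/
def GB_nx_nx_ty (γ : ℝ → ℝ × ℝ) (t : ℝ) (x : ℝ × ℝ) (s' : ℝ) : ℝ :=
  -(1 / (2 * π)) * dot2 (x - γ s') (nor γ t) * dot2 (nor γ t) (tang γ s')
      / dot2 (x - γ s') (x - γ s')
    + 1 / (2 * π) * dot2 (x - γ s') (tang γ s') * (dot2 (x - γ s') (nor γ t)) ^ 2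
      / (dot2 (x - γ s') (x - γ s')) ^ 2
    - 1 / (4 * π) * dot2 (x - γ s') (tang γ s') / dot2 (x - γ s') (x - γ s')

/-- Explicit formula for `G^B_{τ_x τ_x τ_y}(x, γ(s'))`, with `r = x − γ(s')`,
`τ_x = τ(t)`, `τ_y = τ(s')`. -/
def GB_tx_tx_ty (γ : ℝ → ℝ × ℝ) (t : ℝ) (x : ℝ × ℝ) (s' : ℝ) : ℝ :=
  -(1 / (2 * π)) * dot2 (x - γ s') (tang γ t) * dot2 (tang γ t) (tang γ s')
      / dot2 (x - γ s') (x - γ s')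
    + 1 / (2 * π) * dot2 (x - γ s') (tang γ s') * (dot2 (x - γ s') (tang γ t)) ^ 2
      / (dot2 (x - γ s') (x - γ s')) ^ 2
    - 1 / (4 * π) * dot2 (x - γ s') (tang γ s') / dot2 (x - γ s') (x - γ s')

/-- The Hilbert transform kernel `K^H(x, γ(s')) = (r·τ(s'))/(π‖r‖²)`. -/
def KH (γ : ℝ → ℝ × ℝ) (x : ℝ × ℝ) (s' : ℝ) : ℝ :=
  dot2 (x - γ s') (tang γ s') / (π * dot2 (x - γ s') (x - γ s'))

/-!
Write `r = γ t - γ y = -(y - t) • u y` with `u = dslope γ t`; since `γ` is `C²`, `u` is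
differentiable at `t` with `u t = τ(t)`. When `β = (1 + ν) / 2` the `-(r·τ_y)/(4π‖r‖²)` terms of
the two biharmonic kernels cancel the Hilbert kernel, leaving
`(N_n(r, τ_y) + ν N_τ(r, τ_y)) / (2π‖r‖⁴)` with the cubic
`N_a(r, w) = (r·w)(r·a)² - (r·a)(a·w)‖r‖²`, so the sum equals
`-(N_n + ν N_τ)(u y, τ y) / ((y - t) · 2π‖u y‖⁴)`. Each `N_a` vanishes on the diagonal `r = w`,
and so does its derivative along any curve through a diagonal point `(v, v)` as soon as `a = v`
or `a ⊥ v`; at `v = τ(t)` this covers `a = τ(t)` and `a = n(t)`. Hence the numerator is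
`o(y - t)`.
-/

theorem hasDerivAt_dslope_same {E : Type*} [NormedAddCommGroup E] [NormedSpace ℝ E]
    {f : ℝ → E} {a : ℝ} {f'' : E} (hf : Differentiable ℝ f) (hf' : HasDerivAt (deriv f) f'' a) :
    HasDerivAt (dslope f a) ((2 : ℝ)⁻¹ • f'') a := by
  set g : ℝ → E := fun x => f x - f a - (x - a) • deriv f a - ((x - a) ^ 2 / 2) • f''
  have hg : ∀ x, HasDerivAt g (deriv f x - deriv f a - (x - a) • f'') x := by
    intro x
    have hsq : HasDerivAt (fun y : ℝ => (y - a) ^ 2 / 2) (x - a) x :=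
      ((((hasDerivAt_id' x).sub_const a).fun_pow 2).div_const 2).congr_deriv (by ring)
    simpa using (((hf x).hasDerivAt.sub_const (f a)).fun_sub
      (((hasDerivAt_id' x).sub_const a).smul_const (deriv f a))).fun_sub (hsq.smul_const f'')
  have hg' : (fun x => deriv f x - deriv f a - (x - a) • f'') =o[𝓝[Set.univ] a]
      fun x => (x - a) ^ 1 := by
    simpa using hf'.isLittleO
  have hgo : g =o[𝓝 a] fun x => (x - a) ^ 2 := by
    simpa [g] using Convex.isLittleO_pow_succ_real convex_univ (Set.mem_univ a)
      (fun x _ => (hg x).hasDerivWithinAt) hg'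
  rw [hasDerivAt_iff_isLittleO]
  refine (((Asymptotics.isBigO_refl (fun x => (x - a)⁻¹) _).smul_isLittleO hgo).congr (fun x => ?_)
    (fun x => ?_))
  · rcases eq_or_ne x a with rfl | hx
    · simp [dslope_same]
    · symm
      rw [eq_inv_smul_iff₀ (sub_ne_zero.2 hx), smul_sub, smul_sub, sub_smul_dslope, dslope_same]
      simp only [g, smul_smul]
      module
  · rcases eq_or_ne x a with rfl | hx
    · simp
    · rw [smul_eq_mul]
      field_simp [sub_ne_zero.2 hx]

theorem dot2_comm (v w : ℝ × ℝ) : dot2 v w = dot2 w v := by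
  unfold dot2; ring

theorem dot2_smul_left (c : ℝ) (v w : ℝ × ℝ) : dot2 (c • v) w = c * dot2 v w := by
  simp only [dot2, Prod.smul_fst, Prod.smul_snd, smul_eq_mul]; ring

theorem dot2_smul_right (c : ℝ) (v w : ℝ × ℝ) : dot2 v (c • w) = c * dot2 v w := by
  rw [dot2_comm, dot2_smul_left, dot2_comm]

theorem HasDerivAt.dot2 {u w : ℝ → ℝ × ℝ} {u' w' : ℝ × ℝ} {x : ℝ}
    (hu : HasDerivAt u u' x) (hw : HasDerivAt w w' x) :
    HasDerivAt (fun y => dot2 (u y) (w y)) (dot2 u' (w x) + dot2 (u x) w') x := by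
  have fst {p : ℝ → ℝ × ℝ} {p' : ℝ × ℝ} (hp : HasDerivAt p p' x) :
      HasDerivAt (fun y => (p y).1) p'.1 x :=
    (ContinuousLinearMap.fst ℝ ℝ ℝ).hasFDerivAt.comp_hasDerivAt x hp
  have snd {p : ℝ → ℝ × ℝ} {p' : ℝ × ℝ} (hp : HasDerivAt p p' x) :
      HasDerivAt (fun y => (p y).2) p'.2 x :=
    (ContinuousLinearMap.snd ℝ ℝ ℝ).hasFDerivAt.comp_hasDerivAt x hp
  exact (((fst hu).fun_mul (fst hw)).fun_add ((snd hu).fun_mul (snd hw))).congr_deriv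
    (by unfold _root_.dot2; ring)

def gbNumerator (a r w : ℝ × ℝ) : ℝ :=
  dot2 r w * dot2 r a ^ 2 - dot2 r a * dot2 a w * dot2 r r

theorem gbNumerator_smul (a r w : ℝ × ℝ) (c : ℝ) :
    gbNumerator a (c • r) w = c ^ 3 * gbNumerator a r w := by
  simp only [gbNumerator, dot2_smul_left, dot2_smul_right]; ring

theorem gbNumerator_self (a v : ℝ × ℝ) : gbNumerator a v v = 0 := by
  rw [gbNumerator, dot2_comm a v]; ring

theorem hasDerivAt_gbNumerator {u w : ℝ → ℝ × ℝ} {p q a : ℝ × ℝ} {x : ℝ}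
    (hu : HasDerivAt u p x) (hw : HasDerivAt w q x) (hv : u x = w x) :
    HasDerivAt (fun y => gbNumerator a (u y) (w y))
      (dot2 (u x) a * (dot2 (u x) a * (dot2 q (u x) - dot2 p (u x))
        - dot2 (u x) (u x) * (dot2 q a - dot2 p a))) x := by
  have hua := hu.dot2 (hasDerivAt_const x a)
  refine (((hu.dot2 hw).fun_mul (hua.fun_pow 2)).fun_sub
    ((hua.fun_mul ((hasDerivAt_const x a).dot2 hw)).fun_mul (hu.dot2 hu))).congr_deriv ?_
  simp only [dot2, hv]; ring

theorem hasDerivAt_gbNumerator_eq_zero {u w : ℝ → ℝ × ℝ} {p q a : ℝ × ℝ} {x : ℝ}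
    (hu : HasDerivAt u p x) (hw : HasDerivAt w q x) (hv : u x = w x)
    (ha : a = u x ∨ dot2 (u x) a = 0) :
    HasDerivAt (fun y => gbNumerator a (u y) (w y)) 0 x := by
  convert hasDerivAt_gbNumerator (a := a) hu hw hv using 1
  rcases ha with rfl | ha
  · rw [dot2_comm q, dot2_comm p]; ring
  · rw [ha]; ring

theorem kernelSum_eq (γ : ℝ → ℝ × ℝ) (t ν : ℝ) (x : ℝ × ℝ) (y : ℝ) :
    GB_nx_nx_ty γ t x y + ν * GB_tx_tx_ty γ t x y + (1 + ν) / 2 / 2 * KH γ x y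
      = (gbNumerator (nor γ t) (x - γ y) (tang γ y)
          + ν * gbNumerator (tang γ t) (x - γ y) (tang γ y))
        / (2 * π * dot2 (x - γ y) (x - γ y) ^ 2) := by
  simp only [GB_nx_nx_ty, GB_tx_tx_ty, KH, gbNumerator]
  rcases eq_or_ne (dot2 (x - γ y) (x - γ y)) 0 with hr | hr
  · simp [hr]
  · field_simp
    ring

theorem tendsto_kernelSum_nhdsNE {γ : ℝ → ℝ × ℝ} {t : ℝ} (hγ : Differentiable ℝ γ)
    (hγ' : DifferentiableAt ℝ (deriv γ) t) (hτ : dot2 (deriv γ t) (deriv γ t) ≠ 0) (ν : ℝ) :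
    Tendsto (fun y => GB_nx_nx_ty γ t (γ t) y + ν * GB_tx_tx_ty γ t (γ t) y
      + (1 + ν) / 2 / 2 * KH γ (γ t) y) (𝓝[≠] t) (𝓝 0) := by
  set u := dslope γ t
  set P : ℝ → ℝ := fun y => gbNumerator (nor γ t) (u y) (deriv γ y)
    + ν * gbNumerator (deriv γ t) (u y) (deriv γ y)
  have hu := hasDerivAt_dslope_same hγ hγ'.hasDerivAt
  have hut : u t = deriv γ t := dslope_same γ t
  have hP : HasDerivAt P 0 t := by
    have hτn : dot2 (u t) (nor γ t) = 0 := by rw [hut, dot2, nor]; ring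
    have hn := hasDerivAt_gbNumerator_eq_zero hu hγ'.hasDerivAt hut (Or.inr hτn)
    have ht := hasDerivAt_gbNumerator_eq_zero hu hγ'.hasDerivAt hut (Or.inl hut.symm)
    exact (hn.fun_add (ht.const_mul ν)).congr_deriv (by ring)
  have hP0 : P t = 0 := by simp [P, hut, gbNumerator_self]
  have hslope : Tendsto (slope P t) (𝓝[≠] t) (𝓝 0) := hasDerivAt_iff_tendsto_slope.mp hP
  have hu2 : Tendsto (fun y => dot2 (u y) (u y)) (𝓝[≠] t) (𝓝 (dot2 (deriv γ t) (deriv γ t))) := by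
    rw [← hut]
    exact (hu.dot2 hu).continuousAt.tendsto.mono_left nhdsWithin_le_nhds
  have hlim := hslope.neg.div ((hu2.pow 2).const_mul (2 * π))
    (mul_ne_zero (by positivity) (pow_ne_zero 2 hτ))
  rw [neg_zero, zero_div] at hlim
  refine hlim.congr' ?_
  filter_upwards [self_mem_nhdsWithin, hu2.eventually_ne hτ] with y hy hy2
  have hr : γ t - γ y = (-(y - t)) • u y := by rw [neg_smul, sub_smul_dslope, neg_sub]
  rw [kernelSum_eq, hr, gbNumerator_smul, gbNumerator_smul, dot2_smul_left, dot2_smul_right]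
  simp only [Pi.div_apply, slope_def_field, hP0, P, tang]
  field_simp [sub_ne_zero.2 hy]
  ring

theorem stmt7_general (γ : ℝ → ℝ × ℝ)
    (hγ : ContDiff ℝ (⊤ : ℕ∞) γ)
    (harc : ∀ s, dot2 (deriv γ s) (deriv γ s) = 1)
    (ν β : ℝ) (hβ : β = (1 + ν) / 2) (t : ℝ) :
    Tendsto
      (fun s : ℝ =>
        GB_nx_nx_ty γ t (γ t) (t + s) + ν * GB_tx_tx_ty γ t (γ t) (t + s)
          + β / 2 * KH γ (γ t) (t + s))
      (𝓝[≠] (0 : ℝ)) (𝓝 0) := by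
  subst hβ
  have hγ' : Differentiable ℝ (deriv γ) :=
    (contDiff_infty_iff_deriv.mp hγ).2.differentiable (by simp)
  have hτ : dot2 (deriv γ t) (deriv γ t) ≠ 0 := by simp [harc t]
  have hshift : Tendsto (t + ·) (𝓝[≠] (0 : ℝ)) (𝓝[≠] t) := by
    rw [Tendsto, Filter.map_add_left_nhdsNE, add_zero]
  exact (tendsto_kernelSum_nhdsNE (hγ.differentiable (by simp)) (hγ' t) hτ ν).comp hshift

theorem stmt7 (L : ℝ) (hL : 0 < L) (γ : ℝ → ℝ × ℝ)
    (hγ : ContDiff ℝ (⊤ : ℕ∞) γ)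
    (hper : ∀ s, γ (s + L) = γ s)
    (hinj : Set.InjOn γ (Set.Ico 0 L))
    (harc : ∀ s, dot2 (deriv γ s) (deriv γ s) = 1)
    (ν β : ℝ) (hβ : β = (1 + ν) / 2) (t : ℝ) :
    Tendsto
      (fun s : ℝ =>
        GB_nx_nx_ty γ t (γ t) (t + s) + ν * GB_tx_tx_ty γ t (γ t) (t + s)
          + β / 2 * KH γ (γ t) (t + s))
      (𝓝[≠] (0 : ℝ)) (𝓝 0) :=
  stmt7_general γ hγ harc ν β hβ t
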